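/- For every nonnegative integer n, the Hankel determinant d_0(n,t) = \det( M_{i+j}(t) )_{i,j=0}^{n-1} equals 1 (with the convention that the empty determinant for n = 0 equals 1). -/

import Mathlib

/-!
Writing `M_n` for the vector `(M_{n,k})_{k ≥ 0}`, the recurrence says `M_{n+1} = T M_n` for the
symmetric tridiagonal operator `T`. Hence `⟨M_{a+1}, M_b⟩ = ⟨M_a, M_{b+1}⟩`, and moving all steps
to one side gives `M_{a+b,0} = ⟨M_a, M_b⟩`. The Hankel matrix is therefore `A Aᵀ` with
`A = (M_{i,k})_{i,k<n}`, which is lower unitriangular since `M_{i,k} = 0` for `k > i` and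
`M_{i,i} = 1`.
-/

open Polynomial Finset

noncomputable def motzkinPoly : ℕ → ℤ → Polynomial ℤ
  | 0, k => if k = 0 then 1 else 0
  | n + 1, k =>
      if k < 0 then 0 else
        motzkinPoly n (k - 1) + X * motzkinPoly n k + motzkinPoly n (k + 1)
  termination_by n _ => n

theorem motzkinPoly_of_neg (n : ℕ) {k : ℤ} (hk : k < 0) : motzkinPoly n k = 0 := by
  cases n with
  | zero => simp [motzkinPoly, hk.ne]
  | succ n => simp [motzkinPoly, hk]

theorem motzkinPoly_succ (n : ℕ) {k : ℤ} (hk : 0 ≤ k) :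
    motzkinPoly (n + 1) k =
      motzkinPoly n (k - 1) + X * motzkinPoly n k + motzkinPoly n (k + 1) := by
  simp [motzkinPoly, not_lt.2 hk]

theorem motzkinPoly_of_lt {n : ℕ} {k : ℤ} (hk : (n : ℤ) < k) : motzkinPoly n k = 0 := by
  induction n generalizing k with
  | zero => simp [motzkinPoly]; omega
  | succ n ih =>
    rw [motzkinPoly_succ n (by omega), ih (by omega), ih (by omega), ih (by omega)]
    ring

theorem motzkinPoly_self (n : ℕ) : motzkinPoly n n = 1 := by
  induction n with
  | zero => simp [motzkinPoly]
  | succ n ih =>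
    rw [Nat.cast_succ, motzkinPoly_succ n (by positivity), add_sub_cancel_right, ih,
      motzkinPoly_of_lt (by omega), motzkinPoly_of_lt (by omega)]
    ring

theorem sum_range_mul_shift {R : Type*} [NonUnitalNonAssocSemiring R] (f g : ℤ → R) (N : ℕ)
    (hf : f (-1) = 0) (hg : g N = 0) :
    ∑ k ∈ range N, f (k - 1) * g k = ∑ k ∈ range N, f k * g (k + 1) := by
  have h := (sum_range_succ (fun k : ℕ => f (k - 1) * g k) N).symm.trans
    (sum_range_succ' (fun k : ℕ => f (k - 1) * g k) N)
  simpa [hf, hg] using h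

theorem sum_motzkinPoly_succ_mul {a b N : ℕ} (ha : a < N) (hb : b < N) :
    ∑ k ∈ range N, motzkinPoly (a + 1) k * motzkinPoly b k =
      ∑ k ∈ range N, motzkinPoly a k * motzkinPoly (b + 1) k := by
  have shift {c d : ℕ} (hd : d < N) :
      ∑ k ∈ range N, motzkinPoly c (k - 1) * motzkinPoly d k =
        ∑ k ∈ range N, motzkinPoly c k * motzkinPoly d (k + 1) :=
    sum_range_mul_shift _ _ N (motzkinPoly_of_neg c (by norm_num))
      (motzkinPoly_of_lt (by exact_mod_cast hd))
  have shift_a := shift (c := b) ha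
  simp only [mul_comm (motzkinPoly b _)] at shift_a
  simp only [motzkinPoly_succ _ (Nat.cast_nonneg _), add_mul, mul_add, sum_add_distrib,
    shift hb, ← shift_a]
  simp only [mul_assoc, mul_left_comm (motzkinPoly a _) X]
  abel

theorem motzkinPoly_add_eq_sum {a b N : ℕ} (h : a + b < N) :
    motzkinPoly (a + b) 0 = ∑ k ∈ range N, motzkinPoly a k * motzkinPoly b k := by
  induction a generalizing b with
  | zero =>
    rw [sum_eq_single 0 (fun k _ hk => by rw [motzkinPoly_of_lt (by omega), zero_mul])
      (by simp; omega)]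
    simp [motzkinPoly]
  | succ a ih =>
    rw [add_right_comm, add_assoc, ih (by omega), sum_motzkinPoly_succ_mul (by omega) (by omega)]

theorem motzkinPoly_add_eq_sum_of_lt {a N : ℕ} (b : ℕ) (ha : a < N) :
    motzkinPoly (a + b) 0 = ∑ k ∈ range N, motzkinPoly a k * motzkinPoly b k := by
  rw [motzkinPoly_add_eq_sum (N := a + b + N) (by omega)]
  refine (sum_subset (range_subset_range.2 (by omega)) fun k _ hk => ?_).symm
  rw [mem_range, not_lt] at hk
  rw [motzkinPoly_of_lt (by omega), zero_mul]

/-- The Hankel determinant `d_0(n,t) = det(M_{i+j}(t))` equals `1`. -/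
theorem hankel_det_motzkin (n : ℕ) :
    Matrix.det (Matrix.of fun i j : Fin n => motzkinPoly ((i : ℕ) + (j : ℕ)) 0) = 1 := by
  set A : Matrix (Fin n) (Fin n) ℤ[X] := Matrix.of fun i k => motzkinPoly i (k : ℕ)
  have hankel_eq :
      (Matrix.of fun i j : Fin n => motzkinPoly ((i : ℕ) + (j : ℕ)) 0) = A * A.transpose := by
    ext i j : 1
    simp only [A, Matrix.mul_apply, Matrix.transpose_apply, Matrix.of_apply,
      Fin.sum_univ_eq_sum_range (fun k => motzkinPoly i k * motzkinPoly j k) n]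
    exact motzkinPoly_add_eq_sum_of_lt j i.isLt
  have lower : A.BlockTriangular OrderDual.toDual := fun i k hik =>
    motzkinPoly_of_lt (by exact_mod_cast hik)
  have det_A : A.det = 1 := by
    simp [Matrix.det_of_isLowerTriangular A lower, A, motzkinPoly_self]
  rw [hankel_eq, Matrix.det_mul, Matrix.det_transpose, det_A, one_mul]
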